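/- arXiv:2410.05513 — 3 statements merged into one kernel-verified Lean document; each statement's English description precedes it below -/
import Mathlib

section
/- Let M be a matroid with a collection of flats F₁,…,F_t, each of rank at least 2, covering E(M) with ∑ᵢ (r(Fᵢ) − 1) ≤ k − 1. If Fᵢ and Fⱼ are not skew for some i ≠ j, then replacing the pair Fᵢ, Fⱼ by the single flat cl(Fᵢ ∪ Fⱼ) yields a collection of flats of rank at least 2 covering E(M) whose sum of (rank − 1) is still at most k − 1. Hence every k-degenerate matroid admits such a cover by pairwise skew flats. -/
/-!
For a matroid of finite rank, `rkS` agrees with Mathlib's `eRk`, so submodularity gives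
`r (X ∪ Y) ≤ r X + r Y`, with strict inequality exactly when `X` and `Y` are not skew. Hence
`r (cl (X ∪ Y)) - 1 ≤ (r X - 1) + (r Y - 1)` for a non-skew pair, and replacing the pair by the
closure of its union keeps a cover by flats of rank at least two without increasing the weight
`∑ (r Fᵢ - 1)`. Each merge removes one flat, so merging until no non-skew pair is left terminates.
-/

open Set
open scoped Classical

namespace MatroidPaper

variable {α : Type*}

/-- The rank of a set in a matroid: the supremum of cardinalities of independent subsets. -/
noncomputable def rkS (M : Matroid α) (X : Set α) : ℕ :=
  sSup {n | ∃ I, M.Indep I ∧ I ⊆ X ∧ I.ncard = n}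

/-- The rank of a matroid. -/
noncomputable def rk (M : Matroid α) : ℕ := rkS M M.E

/-- A hyperplane: a flat of rank `rk M - 1`. -/
def Hyp (M : Matroid α) (H : Set α) : Prop := M.IsFlat H ∧ rkS M H = rk M - 1

/-- Two sets are skew if the rank of their union is the sum of their ranks. -/
def SkewSets (M : Matroid α) (X Y : Set α) : Prop :=
  rkS M (X ∪ Y) = rkS M X + rkS M Y

/-- A simple matroid: every subset of the ground set with at most two elements is independent. -/
def SimpleM (M : Matroid α) : Prop := ∀ X ⊆ M.E, X.ncard ≤ 2 → M.Indep X

/-- A real-representable matroid. -/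
def RealRep (M : Matroid α) : Prop :=
  ∃ (n : ℕ) (φ : α → (Fin n → ℝ)), ∀ I, I ⊆ M.E →
    (M.Indep I ↔ LinearIndependent ℝ (fun x : I => φ x))

/-- A matroid is `k`-degenerate if it has rank at most one or its ground set is covered by
flats of rank at least two with `∑ (r(Fᵢ) - 1) ≤ k - 1`. -/
def Degen (M : Matroid α) (k : ℕ) : Prop :=
  rk M ≤ 1 ∨ ∃ (t : ℕ) (F : Fin t → Set α),
    (∀ i, M.IsFlat (F i) ∧ 2 ≤ rkS M (F i)) ∧
    M.E ⊆ ⋃ i, F i ∧ ∑ i, (rkS M (F i) - 1) ≤ k - 1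

/-- A set `X` is `k`-degenerate in `M` if the restriction `M|X` is a `k`-degenerate matroid. -/
def DegenSet (M : Matroid α) (X : Set α) (k : ℕ) : Prop := Degen (M.restrict X) k

/-- `N` is the (one-fold) principal truncation of `F` in `M`. -/
noncomputable def IsPT (M : Matroid α) (F : Set α) (N : Matroid α) : Prop :=
  N.E = M.E ∧ ∀ X ⊆ M.E,
    rkS N X = if F ⊆ M.closure X then rkS M X - 1 else rkS M X

/-- `N` is the complete principal truncation `M ÷ F` of `F` in `M`. -/
def IsCPT (M : Matroid α) (F : Set α) (N : Matroid α) : Prop :=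
  N.E = M.E ∧ ∀ X ⊆ M.E,
    rkS N X = min (rkS M X + (rkS M F - 1)) (rkS M (X ∪ F)) - (rkS M F - 1)

variable {M : Matroid α} {X Y : Set α}

lemma cast_rkS [M.RankFinite] (X : Set α) : (rkS M X : ℕ∞) = M.eRk X := by
  obtain ⟨I, hI⟩ := M.exists_isBasis' X
  have hIfin : I.Finite := hI.indep.finite
  have hmax : IsGreatest {n | ∃ J, M.Indep J ∧ J ⊆ X ∧ J.ncard = n} I.ncard := by
    refine ⟨⟨I, hI.indep, hI.subset, rfl⟩, ?_⟩
    rintro _ ⟨J, hJ, hJX, rfl⟩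
    have hJI : J.encard ≤ I.encard := hI.encard_eq_eRk ▸ hJ.encard_le_eRk_of_subset hJX
    rwa [← hJ.finite.cast_ncard_eq, ← hIfin.cast_ncard_eq, Nat.cast_le] at hJI
  rw [rkS, hmax.csSup_eq, hIfin.cast_ncard_eq, hI.encard_eq_eRk]

lemma rkS_mono [M.RankFinite] (h : X ⊆ Y) : rkS M X ≤ rkS M Y := by
  have h' := M.eRk_mono h
  rwa [← cast_rkS, ← cast_rkS, Nat.cast_le] at h'

lemma rkS_union_le [M.RankFinite] (X Y : Set α) : rkS M (X ∪ Y) ≤ rkS M X + rkS M Y := by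
  have h := M.eRk_union_le_eRk_add_eRk X Y
  rw [← cast_rkS, ← cast_rkS, ← cast_rkS] at h
  exact_mod_cast h

lemma rkS_closure [M.RankFinite] (X : Set α) : rkS M (M.closure X) = rkS M X := by
  have h := M.eRk_closure_eq X
  rwa [← cast_rkS, ← cast_rkS, Nat.cast_inj] at h

lemma rkS_closure_union_sub_one_le [M.RankFinite] (h : ¬ SkewSets M X Y) :
    rkS M (M.closure (X ∪ Y)) - 1 ≤ (rkS M X - 1) + (rkS M Y - 1) := by
  have hle := rkS_union_le (M := M) X Y
  rw [rkS_closure]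
  unfold SkewSets at h
  omega

section Cover

variable {ι κ : Type*} [Fintype ι] [Fintype κ]

def IsDegenCover (M : Matroid α) (k : ℕ) (F : ι → Set α) : Prop :=
  (∀ i, M.IsFlat (F i) ∧ 2 ≤ rkS M (F i)) ∧ M.E ⊆ ⋃ i, F i ∧ ∑ i, (rkS M (F i) - 1) ≤ k - 1

variable {k : ℕ} {F : ι → Set α}

lemma IsDegenCover.comp_equiv (hF : IsDegenCover M k F) (e : κ ≃ ι) :
    IsDegenCover M k (F ∘ e) := by
  obtain ⟨hflat, hcov, hsum⟩ := hF
  refine ⟨fun i => hflat (e i), ?_, ?_⟩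
  · rwa [Function.comp_def, e.surjective.iUnion_comp F]
  · rwa [Function.comp_def, e.sum_comp (fun i => rkS M (F i) - 1)]

variable [DecidableEq ι] {i j : ι}

lemma IsDegenCover.merge [M.RankFinite] (hF : IsDegenCover M k F) (hij : i ≠ j)
    (hns : ¬ SkewSets M (F i) (F j)) :
    M.IsFlat (M.closure (F i ∪ F j)) ∧ 2 ≤ rkS M (M.closure (F i ∪ F j)) ∧
    (M.E ⊆ M.closure (F i ∪ F j) ∪ ⋃ l ∈ ({i, j} : Set ι)ᶜ, F l) ∧
    (rkS M (M.closure (F i ∪ F j)) - 1) +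
      ∑ l ∈ Finset.univ \ {i, j}, (rkS M (F l) - 1) ≤ k - 1 := by
  obtain ⟨hflat, hcov, hsum⟩ := hF
  have hsub : F i ∪ F j ⊆ M.closure (F i ∪ F j) :=
    M.subset_closure _ (union_subset (hflat i).1.subset_ground (hflat j).1.subset_ground)
  refine ⟨M.isFlat_closure _, ?_, ?_, ?_⟩
  · rw [rkS_closure]
    exact (hflat i).2.trans (rkS_mono subset_union_left)
  · refine hcov.trans (iUnion_subset fun l => ?_)
    by_cases hl : l ∈ ({i, j} : Set ι)
    · rcases hl with rfl | rfl
      exacts [subset_union_of_subset_left (subset_union_left.trans hsub) _,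
        subset_union_of_subset_left (subset_union_right.trans hsub) _]
    · exact subset_union_of_subset_right (subset_biUnion_of_mem hl) _
  · have hsplit := Finset.sum_sdiff (Finset.subset_univ {i, j}) (f := fun l => rkS M (F l) - 1)
    rw [Finset.sum_pair hij] at hsplit
    have := rkS_closure_union_sub_one_le hns
    omega

variable (M) in
def mergePair (F : ι → Set α) (i j : ι) : Option {l // l ∉ ({i, j} : Set ι)} → Set α :=
  fun o => o.elim (M.closure (F i ∪ F j)) (fun l => F l)

lemma card_option_compl_pair_lt (hij : i ≠ j) :
    Fintype.card (Option {l // l ∉ ({i, j} : Set ι)}) < Fintype.card ι := by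
  have h2 : 2 ≤ Fintype.card ι := (Finset.card_pair hij).symm.le.trans (Finset.card_le_univ _)
  rw [Fintype.card_option, Fintype.card_subtype_compl, Fintype.card_ofFinset]
  simp only [toFinset_singleton, Finset.mem_singleton, hij, not_false_eq_true,
    Finset.card_insert_of_notMem, Finset.card_singleton]
  omega

lemma IsDegenCover.isDegenCover_mergePair [M.RankFinite] (hF : IsDegenCover M k F) (hij : i ≠ j)
    (hns : ¬ SkewSets M (F i) (F j)) : IsDegenCover M k (mergePair M F i j) := by
  obtain ⟨hflat, hrk, hcov, hsum⟩ := hF.merge hij hns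
  refine ⟨?_, ?_, ?_⟩
  · rintro (_ | ⟨l, -⟩)
    exacts [⟨hflat, hrk⟩, hF.1 l]
  · exact hcov.trans (union_subset (subset_iUnion (mergePair M F i j) none)
      (iUnion₂_subset fun l hl => subset_iUnion (mergePair M F i j) (some ⟨l, hl⟩)))
  · rw [Fintype.sum_option]
    rwa [Finset.sum_subtype _ (p := (· ∉ ({i, j} : Set ι))) (by simp)] at hsum

theorem IsDegenCover.exists_pairwise_skew [M.RankFinite] (hF : IsDegenCover M k F) :
    ∃ (t : ℕ) (G : Fin t → Set α), IsDegenCover M k G ∧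
      ∀ i j : Fin t, i ≠ j → SkewSets M (G i) (G j) := by
  induction hn : Fintype.card ι using Nat.strong_induction_on generalizing ι with
  | _ n ih =>
    by_cases hskew : ∀ i j : ι, i ≠ j → SkewSets M (F i) (F j)
    · exact ⟨_, F ∘ (Fintype.equivFin ι).symm, hF.comp_equiv _,
        fun i j hij => hskew _ _ ((Fintype.equivFin ι).symm.injective.ne hij)⟩
    push Not at hskew
    obtain ⟨i, j, hij, hns⟩ := hskew
    exact ih _ (hn ▸ card_option_compl_pair_lt hij) (hF.isDegenCover_mergePair hij hns) rfl

end Cover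

/-- Merging a non-skew pair of covering flats keeps a valid cover; hence every `k`-degenerate
matroid admits a cover by pairwise-skew flats. -/
theorem stmt3 (M : Matroid α) [M.Finite] (k : ℕ) :
    (∀ (t : ℕ) (F : Fin t → Set α),
      (∀ i, M.IsFlat (F i) ∧ 2 ≤ rkS M (F i)) →
      M.E ⊆ ⋃ i, F i → ∑ i, (rkS M (F i) - 1) ≤ k - 1 →
      ∀ i j : Fin t, i ≠ j → ¬ SkewSets M (F i) (F j) →
        (M.IsFlat (M.closure (F i ∪ F j)) ∧ 2 ≤ rkS M (M.closure (F i ∪ F j)) ∧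
        (M.E ⊆ M.closure (F i ∪ F j) ∪ ⋃ l ∈ ({i, j} : Set (Fin t))ᶜ, F l) ∧
        (rkS M (M.closure (F i ∪ F j)) - 1) +
          ∑ l ∈ Finset.univ \ {i, j}, (rkS M (F l) - 1) ≤ k - 1)) ∧
    (Degen M k → rk M ≤ 1 ∨ ∃ (t : ℕ) (F : Fin t → Set α),
      (∀ i, M.IsFlat (F i) ∧ 2 ≤ rkS M (F i)) ∧
      M.E ⊆ ⋃ i, F i ∧ ∑ i, (rkS M (F i) - 1) ≤ k - 1 ∧
      ∀ i j : Fin t, i ≠ j → SkewSets M (F i) (F j)) := by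
  refine ⟨fun t F h1 h2 h3 i j hij hns => IsDegenCover.merge ⟨h1, h2, h3⟩ hij hns, ?_⟩
  rintro (h | ⟨t, F, hF⟩)
  · exact .inl h
  · obtain ⟨t', G, ⟨h1, h2, h3⟩, hskew⟩ := IsDegenCover.exists_pairwise_skew hF
    exact .inr ⟨t', G, h1, h2, h3, hskew⟩

end MatroidPaper
end

section
/- Let k ≥ 2 and let M be a simple matroid of rank k+1. If (R,B) is a partition of E(M) such that r(B) ≥ 2, every hyperplane of M meets R, and for every line L of M|B there is a rank-(k−1) flat F skew to L with F ∩ R = ∅, then |R| ≥ 3. -/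
/-!
Suppose `|R| ≤ 2`. For distinct blue `u, v`, the hypothesis on the line of `M|B` through them
gives a blue flat `F` of rank `k - 1` with `F ∪ {u, v}` spanning. Every hyperplane through `F`
is `cl (F + e)` and contains a red element `c`; by exchange `e ∈ cl (F + c)`, and `c`, `e` lie on
a common circuit. No such hyperplane contains both `u` and `v`, so they are attached to two
different red elements: hence `R = {a, b}` and every pair of blue elements is split between `a`
and `b`. As `F ∪ {u, v} ⊆ B` has rank `k + 1 ≥ 3`, there are three blue elements, so some blue
`p` shares a circuit with `a` and one with `b`. Lying on a common circuit is transitive, so `a`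
and `b` lie on a circuit `C`; extending `C - b` to a basis `W`, the hyperplane `cl (W - a)`
avoids both red elements.
-/

open Set
open scoped Classical

namespace Matroid

open MatroidPaper

variable {α : Type*} {M : Matroid α} {C C₁ C₂ F R X Y I : Set α} {a b e f g u v x : α}

section Rank

variable [M.RankFinite]

lemma IsBasis'.rkS_eq (hI : M.IsBasis' I X) : rkS M X = I.ncard := by
  refine IsGreatest.csSup_eq ⟨⟨I, hI.indep, hI.subset, rfl⟩, ?_⟩
  rintro _ ⟨J, hJ, hJX, rfl⟩
  have h := (hJ.encard_le_eRk_of_subset hJX).trans_eq hI.encard_eq_eRk.symm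
  rwa [← hJ.finite.cast_ncard_eq, ← hI.indep.finite.cast_ncard_eq, Nat.cast_le] at h

lemma Indep.rkS_eq (hI : M.Indep I) : rkS M I = I.ncard :=
  hI.isBasis_self.isBasis'.rkS_eq

lemma cast_rkS (X : Set α) : (rkS M X : ℕ∞) = M.eRk X := by
  obtain ⟨I, hI⟩ := M.exists_isBasis' X
  rw [hI.rkS_eq, hI.indep.finite.cast_ncard_eq, hI.encard_eq_eRk]

lemma rkS_mono (h : X ⊆ Y) : rkS M X ≤ rkS M Y := by
  rw [← Nat.cast_le (α := ℕ∞), cast_rkS, cast_rkS]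
  exact M.eRk_mono h

lemma rkS_closure (X : Set α) : rkS M (M.closure X) = rkS M X := by
  rw [← Nat.cast_inj (R := ℕ∞), cast_rkS, cast_rkS, eRk_closure_eq]

lemma rkS_le_of_subset_closure (h : X ⊆ M.closure Y) : rkS M X ≤ rkS M Y :=
  (rkS_mono h).trans (rkS_closure Y).le

lemma rkS_insert_le (e : α) (X : Set α) : rkS M (insert e X) ≤ rkS M X + 1 := by
  rw [← Nat.cast_le (α := ℕ∞), Nat.cast_add_one, cast_rkS, cast_rkS]
  exact M.eRk_insert_le_add_one e X

lemma rkS_insert_of_mem_sdiff_closure (he : e ∈ M.E \ M.closure X) :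
    rkS M (insert e X) = rkS M X + 1 := by
  rw [← Nat.cast_inj (R := ℕ∞), Nat.cast_add_one, cast_rkS, cast_rkS, eRk_insert_eq_add_one he]

lemma rkS_restrict {R : Set α} (h : X ⊆ R) : rkS (M ↾ R) X = rkS M X := by
  rw [← Nat.cast_inj (R := ℕ∞), cast_rkS, cast_rkS, restrict_eRk_eq M h]

lemma rkS_le_ncard (hX : X.Finite) : rkS M X ≤ X.ncard := by
  rw [← Nat.cast_le (α := ℕ∞), cast_rkS, hX.cast_ncard_eq]
  exact M.eRk_le_encard X

lemma nontrivial_of_two_le_rkS (h : 2 ≤ rkS M X) : X.Nontrivial := by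
  obtain ⟨I, hI⟩ := M.exists_isBasis' X
  have := hI.indep.finite.to_subtype
  rw [hI.rkS_eq] at h
  exact (one_lt_ncard_iff_nontrivial.1 h).mono hI.subset

end Rank

section Circuit

def OnCommonCircuit (M : Matroid α) (e f : α) : Prop := ∃ C, M.IsCircuit C ∧ e ∈ C ∧ f ∈ C

lemma OnCommonCircuit.symm (h : M.OnCommonCircuit e f) : M.OnCommonCircuit f e :=
  let ⟨C, hC, he, hf⟩ := h
  ⟨C, hC, hf, he⟩

lemma IsCircuit.inter_sdiff_nonempty (hC₁ : M.IsCircuit C₁) (hx : x ∈ C₁) (hC : M.IsCircuit C)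
    (hCs : C ⊆ (C₁ ∪ C₂) \ {x}) : (C ∩ (C₂ \ C₁)).Nonempty := by
  by_contra h
  have hCx : C ⊆ C₁ \ {x} := fun z hz =>
    ⟨by_contra fun hz₁ => h ⟨z, hz, (hCs hz).1.resolve_left hz₁, hz₁⟩, (hCs hz).2⟩
  exact hC.not_indep (hC₁.ssubset_indep (hCx.trans_ssubset (sdiff_singleton_ssubset.2 hx)))

lemma IsCircuit.onCommonCircuit [M.Finitary] (hC₁ : M.IsCircuit C₁) (hC₂ : M.IsCircuit C₂)
    (h₁₂ : (C₁ ∩ C₂).Nonempty) (he : e ∈ C₁) (hg : g ∈ C₂) : M.OnCommonCircuit e g := by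
  induction hn : (C₁ ∪ C₂).ncard using Nat.strong_induction_on generalizing C₁ C₂ with
  | _ n ih =>
  by_cases hgC₁ : g ∈ C₁
  · exact ⟨C₁, hC₁, he, hgC₁⟩
  by_cases heC₂ : e ∈ C₂
  · exact ⟨C₂, hC₂, heC₂, hg⟩
  obtain ⟨x, hx₁, hx₂⟩ := h₁₂
  have hfin : (C₁ ∪ C₂).Finite := hC₁.finite.union hC₂.finite
  obtain ⟨C₃, hC₃s, hC₃, he₃⟩ := hC₁.strong_elimination hC₂ hx₁ hx₂ he heC₂
  obtain ⟨C₄, hC₄s, hC₄, hg₄⟩ := hC₂.strong_elimination hC₁ hx₂ hx₁ hg hgC₁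
  obtain ⟨y, hy₃, hy₂, -⟩ := hC₁.inter_sdiff_nonempty hx₁ hC₃ hC₃s
  obtain ⟨z, hz₄, hz₁, hz₂⟩ := hC₂.inter_sdiff_nonempty hx₂ hC₄ hC₄s
  by_cases hlt : (C₃ ∪ C₂).ncard < n
  · exact ih _ hlt hC₃ hC₂ ⟨y, hy₃, hy₂⟩ he₃ hg rfl
  -- otherwise `C₃ ∪ C₂ = C₁ ∪ C₂`, so `C₃` contains `z ∈ C₁ \ C₂` and meets `C₄`
  have hsub : C₃ ∪ C₂ ⊆ C₁ ∪ C₂ := union_subset (hC₃s.trans sdiff_subset) subset_union_right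
  have hz₃ : z ∈ C₃ :=
    ((eq_of_subset_of_ncard_le hsub (by omega) hfin).symm.subset (Or.inl hz₁)).resolve_right hz₂
  refine ih _ ?_ hC₃ hC₄ ⟨z, hz₃, hz₄⟩ he₃ hg₄ rfl
  rw [union_comm C₂] at hC₄s
  calc (C₃ ∪ C₄).ncard ≤ ((C₁ ∪ C₂) \ {x}).ncard :=
        ncard_le_ncard (union_subset hC₃s hC₄s) hfin.sdiff
    _ < n := hn ▸ ncard_sdiff_singleton_lt_of_mem (Or.inl hx₁) hfin

lemma OnCommonCircuit.trans [M.Finitary] (h₁ : M.OnCommonCircuit e f)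
    (h₂ : M.OnCommonCircuit f g) : M.OnCommonCircuit e g :=
  let ⟨_, hC₁, he, hf₁⟩ := h₁
  let ⟨_, hC₂, hf₂, hg⟩ := h₂
  hC₁.onCommonCircuit hC₂ ⟨f, hf₁, hf₂⟩ he hg

lemma onCommonCircuit_of_mem_closure_insert (he : e ∈ M.closure (insert f X) \ M.closure X)
    (hef : e ≠ f) : M.OnCommonCircuit e f := by
  have heX : e ∉ X := fun h => he.2 (M.mem_closure_of_mem' h (mem_ground_of_mem_closure he.1))
  obtain ⟨C, hCs, hC, heC⟩ := exists_isCircuit_of_mem_closure he.1 (by simp [hef, heX])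
  refine ⟨C, hC, heC, by_contra fun hfC => he.2 ?_⟩
  refine M.closure_subset_closure (fun z hz => ?_) (hC.mem_closure_sdiff_singleton_of_mem heC)
  obtain ⟨hzC, hze⟩ := hz
  rcases hCs hzC with rfl | rfl | hzX
  exacts [absurd rfl hze, absurd hzC hfC, hzX]

end Circuit

section Hyperplane

variable [M.RankFinite]

lemma OnCommonCircuit.exists_hyp_notMem (h : M.OnCommonCircuit a b) (hab : a ≠ b) :
    ∃ H, Hyp M H ∧ a ∉ H ∧ b ∉ H := by
  obtain ⟨C, hC, haC, hbC⟩ := h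
  obtain ⟨W, hW, hCW⟩ := (hC.sdiff_singleton_indep hbC).exists_isBase_superset
  have haW : a ∈ W := hCW ⟨haC, hab⟩
  refine ⟨M.closure (W \ {a}), ⟨isFlat_closure _, ?_⟩,
    hW.indep.notMem_closure_sdiff_of_mem haW, fun hb => ?_⟩
  · rw [rkS_closure, (hW.indep.subset sdiff_subset).rkS_eq, ncard_sdiff_singleton_of_mem haW,
      rk, hW.isBasis_ground.isBasis'.rkS_eq]
  -- `C \ {a} ⊆ insert b (W \ {a})`, so `a ∈ closure (C \ {a})` would lie in the hyperplane
  refine hW.indep.notMem_closure_sdiff_of_mem haW ?_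
  rw [← closure_insert_eq_of_mem_closure hb]
  refine M.closure_subset_closure ?_ (hC.mem_closure_sdiff_singleton_of_mem haC)
  rintro z ⟨hzC, hza⟩
  obtain rfl | hzb := eq_or_ne z b
  · exact mem_insert _ _
  · exact Or.inr ⟨hCW ⟨hzC, hzb⟩, hza⟩

lemma IsFlat.hyp_closure_insert (hF : M.IsFlat F) (hFr : rkS M F + 2 = rk M) (he : e ∈ M.E)
    (heF : e ∉ F) : Hyp M (M.closure (insert e F)) := by
  refine ⟨isFlat_closure _, ?_⟩
  rw [rkS_closure, rkS_insert_of_mem_sdiff_closure ⟨he, by rwa [hF.closure]⟩]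
  omega

lemma notMem_of_rkS_add_one_lt (h : rkS M F + 1 < rkS M (F ∪ {u, v})) : u ∉ F := by
  intro hu
  have := rkS_mono (M := M) (union_subset (subset_insert v F)
    (pair_subset (mem_insert_of_mem v hu) (mem_insert v F)))
  have := rkS_insert_le (M := M) v F
  omega

lemma not_pair_subset_closure_insert (h : rkS M F + 1 < rkS M (F ∪ {u, v})) (hFE : F ⊆ M.E)
    (c : α) : ¬ {u, v} ⊆ M.closure (insert c F) := by
  intro huv
  have := rkS_le_of_subset_closure
    (union_subset (M.subset_closure_of_subset' (subset_insert c F) hFE) huv)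
  have := rkS_insert_le (M := M) c F
  omega

lemma exists_mem_onCommonCircuit (hhyp : ∀ H, Hyp M H → (H ∩ R).Nonempty)
    (hF : M.IsFlat F) (hFr : rkS M F + 2 = rk M) (hFR : Disjoint F R) (he : e ∈ M.E)
    (heF : e ∉ F) (heR : e ∉ R) :
    ∃ c ∈ R, e ∈ M.closure (insert c F) ∧ M.OnCommonCircuit c e := by
  obtain ⟨c, hcH, hcR⟩ := hhyp _ (hF.hyp_closure_insert hFr he heF)
  have hc : c ∈ M.closure (insert e F) \ M.closure F :=
    ⟨hcH, by rw [hF.closure]; exact hFR.notMem_of_mem_right hcR⟩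
  exact ⟨c, hcR, (closure_exchange hc).1,
    onCommonCircuit_of_mem_closure_insert hc (ne_of_mem_of_not_mem hcR heR)⟩

lemma exists_ne_mem_onCommonCircuit (hhyp : ∀ H, Hyp M H → (H ∩ R).Nonempty)
    (hF : M.IsFlat F) (hFr : rkS M F + 2 = rk M) (hFuv : rkS M (F ∪ {u, v}) = rk M)
    (hFR : Disjoint F R) (hu : u ∈ M.E) (hv : v ∈ M.E) (huR : u ∉ R) (hvR : v ∉ R) :
    ∃ c₁ ∈ R, ∃ c₂ ∈ R, c₁ ≠ c₂ ∧ M.OnCommonCircuit c₁ u ∧ M.OnCommonCircuit c₂ v := by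
  have hlt : rkS M F + 1 < rkS M (F ∪ {u, v}) := by omega
  obtain ⟨c₁, hc₁, hu₁, hcu⟩ :=
    exists_mem_onCommonCircuit hhyp hF hFr hFR hu (notMem_of_rkS_add_one_lt hlt) huR
  obtain ⟨c₂, hc₂, hv₂, hcv⟩ := exists_mem_onCommonCircuit hhyp hF hFr hFR hv
    (notMem_of_rkS_add_one_lt (by rwa [pair_comm])) hvR
  refine ⟨c₁, hc₁, c₂, hc₂, ?_, hcu, hcv⟩
  rintro rfl
  exact not_pair_subset_closure_insert hlt hF.subset_ground c₁ (pair_subset hu₁ hv₂)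

end Hyperplane

lemma exists_onCommonCircuit_of_forall_pair {S : Set α} (hRab : R ⊆ {a, b})
    (hsplit : ∀ u ∈ S, ∀ v ∈ S, u ≠ v →
      ∃ c₁ ∈ R, ∃ c₂ ∈ R, c₁ ≠ c₂ ∧ M.OnCommonCircuit c₁ u ∧ M.OnCommonCircuit c₂ v)
    (hS : 2 < S.ncard) : ∃ p, M.OnCommonCircuit a p ∧ M.OnCommonCircuit b p := by
  have hsplit' : ∀ u ∈ S, ∀ v ∈ S, u ≠ v →
      M.OnCommonCircuit a u ∧ M.OnCommonCircuit b v ∨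
        M.OnCommonCircuit b u ∧ M.OnCommonCircuit a v := by
    intro u hu v hv huv
    obtain ⟨c₁, hc₁, c₂, hc₂, hne, h₁, h₂⟩ := hsplit u hu v hv huv
    rcases hRab hc₁ with rfl | rfl <;> rcases hRab hc₂ with rfl | rfl <;> tauto
  obtain ⟨x, y, z, hx, hy, hz, hxy, hxz, hyz⟩ :=
    (two_lt_ncard_iff (finite_of_ncard_pos (by omega))).1 hS
  have := hsplit' x hx y hy hxy
  have := hsplit' x hx z hz hxz
  have := hsplit' y hy z hz hyz
  by_contra! h
  have := h x
  have := h y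
  have := h z
  tauto

end Matroid

namespace MatroidPaper

open Matroid

variable {α : Type*} {M : Matroid α} {B F R : Set α} {u v : α}

lemma SimpleM.rkS_pair [M.RankFinite] (hs : SimpleM M) (hu : u ∈ M.E) (hv : v ∈ M.E)
    (huv : u ≠ v) : rkS M {u, v} = 2 := by
  rw [(hs _ (pair_subset hu hv) (ncard_pair huv).le).rkS_eq, ncard_pair huv]

lemma SimpleM.rkS_restrict_closure_pair [M.RankFinite] (hs : SimpleM M) (hBE : B ⊆ M.E)
    (hu : u ∈ B) (hv : v ∈ B) (huv : u ≠ v) :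
    rkS (M ↾ B) ((M ↾ B).closure {u, v}) = 2 := by
  rw [rkS_closure, rkS_restrict (pair_subset hu hv), hs.rkS_pair (hBE hu) (hBE hv) huv]

lemma SimpleM.rkS_union_pair_of_skewSets [M.RankFinite] (hs : SimpleM M) (hBE : B ⊆ M.E)
    (hFE : F ⊆ M.E) (hu : u ∈ B) (hv : v ∈ B) (huv : u ≠ v)
    (hskew : SkewSets M F ((M ↾ B).closure {u, v})) :
    rkS M (F ∪ {u, v}) = rkS M F + 2 := by
  set L := (M ↾ B).closure {u, v}
  have hLB : L ⊆ B := closure_subset_ground _ _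
  have hL : rkS M L = 2 := by
    rw [← rkS_restrict hLB, hs.rkS_restrict_closure_pair hBE hu hv huv]
  have huvL : {u, v} ⊆ L := (M ↾ B).subset_closure _ (pair_subset hu hv)
  have hLcl : L ⊆ M.closure {u, v} :=
    (restrict_closure_eq M (pair_subset hu hv) hBE).subset.trans inter_subset_left
  rw [← hL, ← hskew]
  refine le_antisymm (rkS_mono (union_subset_union_right F huvL)) (rkS_le_of_subset_closure ?_)
  exact union_subset (M.subset_closure_of_subset' subset_union_left hFE)
    (hLcl.trans (M.closure_subset_closure subset_union_right))

lemma SimpleM.exists_coline [M.RankFinite] {k : ℕ} (hs : SimpleM M) (hBE : B ⊆ M.E)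
    (hline : ∀ L, (M.restrict B).IsFlat L → rkS (M.restrict B) L = 2 →
      ∃ F, M.IsFlat F ∧ rkS M F = k - 1 ∧ SkewSets M F L ∧ F ∩ R = ∅)
    (hu : u ∈ B) (hv : v ∈ B) (huv : u ≠ v) :
    ∃ F, M.IsFlat F ∧ rkS M F = k - 1 ∧ Disjoint F R ∧ rkS M (F ∪ {u, v}) = rkS M F + 2 := by
  obtain ⟨F, hF, hFk, hskew, hFR⟩ :=
    hline _ (isFlat_closure _) (hs.rkS_restrict_closure_pair hBE hu hv huv)
  exact ⟨F, hF, hFk, disjoint_iff_inter_eq_empty.2 hFR,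
    hs.rkS_union_pair_of_skewSets hBE hF.subset_ground hu hv huv hskew⟩

/-- `b_k(2) = 0`: under (C1),(C2),(C3) at least three red elements are needed. -/
theorem stmt10 (k : ℕ) (hk : 2 ≤ k) (M : Matroid α) [M.Finite] (hs : SimpleM M)
    (hr : rk M = k + 1) (R B : Set α) (hRB : R ∪ B = M.E) (hd : Disjoint R B)
    (hB : 2 ≤ rkS M B)
    (hhyp : ∀ H, Hyp M H → (H ∩ R).Nonempty)
    (hline : ∀ L, (M.restrict B).IsFlat L → rkS (M.restrict B) L = 2 →
      ∃ F, M.IsFlat F ∧ rkS M F = k - 1 ∧ SkewSets M F L ∧ F ∩ R = ∅) :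
    3 ≤ R.ncard := by
  by_contra! hR
  have hBE : B ⊆ M.E := hRB ▸ subset_union_right
  have hsplit : ∀ u ∈ B, ∀ v ∈ B, u ≠ v →
      ∃ c₁ ∈ R, ∃ c₂ ∈ R, c₁ ≠ c₂ ∧ M.OnCommonCircuit c₁ u ∧ M.OnCommonCircuit c₂ v := by
    intro u hu v hv huv
    obtain ⟨F, hF, hFk, hFR, hFuv⟩ := hs.exists_coline hBE hline hu hv huv
    exact exists_ne_mem_onCommonCircuit hhyp hF (by omega) (by omega) hFR (hBE hu) (hBE hv)
      (hd.notMem_of_mem_right hu) (hd.notMem_of_mem_right hv)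
  obtain ⟨x, hx, y, hy, hxy⟩ := nontrivial_of_two_le_rkS hB
  obtain ⟨F, hF, hFk, hFR, hFxy⟩ := hs.exists_coline hBE hline hx hy hxy
  have hFB : F ⊆ B := fun z hz =>
    (hRB ▸ hF.subset_ground hz).resolve_left (hFR.notMem_of_mem_left hz)
  -- `B` contains `F ∪ {x, y}`, which has rank `k + 1 ≥ 3`
  have hB3 : 2 < B.ncard := by
    have := rkS_mono (M := M) (union_subset hFB (pair_subset hx hy))
    have := rkS_le_ncard (M := M) (M.ground_finite.subset hBE)
    omega
  obtain ⟨a, ha, b, hb, hab, -⟩ := hsplit x hx y hy hxy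
  have hRab : R = {a, b} := (eq_of_subset_of_ncard_le (pair_subset ha hb)
    (by rw [ncard_pair hab]; omega) (M.ground_finite.subset (hRB ▸ subset_union_left))).symm
  obtain ⟨p, hap, hbp⟩ := exists_onCommonCircuit_of_forall_pair hRab.subset hsplit hB3
  obtain ⟨H, hH, haH, hbH⟩ := (hap.trans hbp.symm).exists_hyp_notMem hab
  obtain ⟨c, hcH, hcR⟩ := hhyp H hH
  rcases hRab ▸ hcR with rfl | rfl <;> contradiction

end MatroidPaper
end

section
/- For k ≥ 3 and t ≥ 3, b_k(t) ≥ (k−1)·t; that is, there exists a simple rank-(k+1) real-representable matroid M with a 2-colouring (R,B), |R| = t, |B| = (k−1)t, such that r(B) ≥ 2, every hyperplane of M contains a red point, and for every line of M|B there is a rank-(k−1) flat skew to it containing no red point. -/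
open Set
open scoped Classical

namespace MatroidPaper

variable {α : Type*}

/-!
Take a near-pencil of `t` points in the plane (`t - 1` collinear points and one point off their
line); it determines exactly `t` directions. The blue points are `k - 1` copies of it placed in
parallel affine planes of `ℝ^(k+1)`, and the red points are the `t` directions, as points at
infinity. A hyperplane has rank `k > k - 1`, so it contains two blue points of one copy and with
them the red point at infinity of the line through them. Given a blue line, pick one point in
each copy so that the line through the two points and this transversal are in general position
(possible because the planar set is not collinear); the transversal spans a flat of rank `k - 1`
skew to the line, and it contains no red point since red vectors vanish on the copy coordinates.
-/

open Submodule Module Function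

lemma finrank_span_image_eq_ncard {V : Type*} [AddCommGroup V] [Module ℝ V] {φ : α → V} {I : Set α}
    (hI : LinearIndepOn ℝ φ I) (hIfin : I.Finite) :
    finrank ℝ (span ℝ (φ '' I)) = I.ncard := by
  have := (hIfin.image φ).fintype
  rw [finrank_span_set_eq_card hI.id_image, ← ncard_eq_toFinset_card', hI.injOn.ncard_image]

lemma exists_pair_span_eq_of_finrank_eq_two {V : Type*} [AddCommGroup V] [Module ℝ V] {S : Set V}
    (hS : S.Finite) (h : finrank ℝ (span ℝ S) = 2) :
    ∃ u ∈ S, ∃ v ∈ S, u ≠ v ∧ span ℝ S = span ℝ {u, v} := by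
  obtain ⟨b, hbS, hspan, hb⟩ := exists_linearIndependent ℝ S
  have := (hS.subset hbS).fintype
  rw [← hspan, finrank_span_set_eq_card hb, ← ncard_eq_toFinset_card'] at h
  obtain ⟨u, v, huv, rfl⟩ := ncard_eq_two.1 h
  exact ⟨u, hbS (mem_insert _ _), v, hbS (mem_insert_of_mem _ rfl), huv, hspan.symm⟩

lemma exists_ne_fst_eq_of_card_lt_finrank {ι κ V : Type*} [Fintype ι] [Finite κ] [AddCommGroup V]
    [Module ℝ V] (f : ι × κ → V) {S : Set (ι × κ)}
    (h : Fintype.card ι < finrank ℝ (span ℝ (f '' S))) :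
    ∃ q ∈ S, ∃ q' ∈ S, q ≠ q' ∧ q.1 = q'.1 := by
  by_contra! hS
  have hinj : InjOn Prod.fst S := fun q hq q' hq' h => by_contra fun hne => hS q hq q' hq' hne h
  have := ((toFinite S).image f).fintype
  have h1 := finrank_span_le_card (R := ℝ) (f '' S)
  rw [← ncard_eq_toFinset_card'] at h1
  have h2 := ncard_image_le (f := f) (toFinite S)
  have h3 := ncard_le_card (Prod.fst '' S)
  rw [hinj.ncard_image, Nat.card_eq_fintype_card] at h3
  omega

lemma extend_image_inter_range {β γ : Type*} {e : β → α} (he : Injective e) (f : β → γ)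
    (g : α → γ) (X : Set α) : extend e f g '' (X ∩ range e) = f '' (e ⁻¹' X) := by
  ext v
  constructor
  · rintro ⟨_, ⟨hx, y, rfl⟩, rfl⟩
    exact ⟨y, hx, (he.extend_apply f g y).symm⟩
  · rintro ⟨y, hy, rfl⟩
    exact ⟨e y, ⟨hy, y, rfl⟩, he.extend_apply f g y⟩

lemma rkS_restrict (M : Matroid α) (B X : Set α) : rkS (M.restrict B) X = rkS M (X ∩ B) := by
  simp only [rkS, Matroid.restrict_indep_iff, subset_inter_iff, and_assoc,
    and_left_comm (b := _ ⊆ B)]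

section LinearMatroid

variable {V : Type*} [AddCommGroup V] [Module ℝ V] [FiniteDimensional ℝ V] {φ : α → V}
  {E F I L X : Set α} {a : α}

noncomputable def linearMatroid (φ : α → V) (E : Set α) (hE : E.Finite) : Matroid α :=
  (IndepMatroid.ofFinite hE (fun I => I ⊆ E ∧ LinearIndepOn ℝ φ I)
    ⟨empty_subset E, linearIndepOn_empty ℝ φ⟩
    (fun _ _ hJ hIJ => ⟨hIJ.trans hJ.1, hJ.2.mono hIJ⟩)
    (fun I J hI hJ hlt => by
      by_contra! hcon
      have hJI : φ '' J ⊆ span ℝ (φ '' I) := by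
        rintro _ ⟨x, hxJ, rfl⟩
        by_cases hxI : x ∈ I
        · exact subset_span (mem_image_of_mem φ hxI)
        by_contra hx
        exact hcon x hxJ hxI (insert_subset (hJ.1 hxJ) hI.1)
          ((linearIndepOn_insert hxI).2 ⟨hI.2, hx⟩)
      have := Submodule.finrank_mono (span_le.2 hJI)
      rw [finrank_span_image_eq_ncard hI.2 (hE.subset hI.1),
        finrank_span_image_eq_ncard hJ.2 (hE.subset hJ.1)] at this
      omega)
    (fun _ hI => hI.1)).matroid

variable {hE : E.Finite}

@[simp] lemma linearMatroid_ground : (linearMatroid φ E hE).E = E := rfl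

@[simp] lemma linearMatroid_indep_iff :
    (linearMatroid φ E hE).Indep I ↔ I ⊆ E ∧ LinearIndepOn ℝ φ I := by
  simp [linearMatroid]

lemma linearMatroid_mem_closure_iff (hI : (linearMatroid φ E hE).Indep I) :
    a ∈ (linearMatroid φ E hE).closure I ↔ a ∈ E ∧ φ a ∈ span ℝ (φ '' I) := by
  rw [hI.mem_closure_iff', linearMatroid_ground]
  refine and_congr_right fun haE => ?_
  by_cases haI : a ∈ I
  · simp only [haI, imp_true_iff, true_iff]
    exact subset_span (mem_image_of_mem φ haI)
  · rw [linearMatroid_indep_iff] at hI ⊢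
    rw [insert_subset_iff, linearIndepOn_insert haI]
    tauto

lemma linearMatroid_span_image_eq_of_isBasis (hIX : (linearMatroid φ E hE).IsBasis I X) :
    span ℝ (φ '' I) = span ℝ (φ '' X) := by
  refine le_antisymm (span_mono (image_mono hIX.subset)) (span_le.2 ?_)
  rintro _ ⟨x, hxX, rfl⟩
  have hx := hIX.subset_closure hxX
  rw [linearMatroid_mem_closure_iff hIX.indep] at hx
  exact hx.2

lemma linearMatroid_closure_eq (X : Set α) :
    (linearMatroid φ E hE).closure X = {a ∈ E | φ a ∈ span ℝ (φ '' (X ∩ E))} := by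
  obtain ⟨I, hI⟩ := (linearMatroid φ E hE).exists_isBasis (X ∩ E) inter_subset_right
  ext a
  rw [← Matroid.closure_inter_ground, linearMatroid_ground, ← hI.closure_eq_closure,
    linearMatroid_mem_closure_iff hI.indep, linearMatroid_span_image_eq_of_isBasis hI,
    mem_ofPred_eq]

lemma rkS_linearMatroid (X : Set α) :
    rkS (linearMatroid φ E hE) X = finrank ℝ (span ℝ (φ '' (X ∩ E))) := by
  obtain ⟨I, hI⟩ := (linearMatroid φ E hE).exists_isBasis (X ∩ E) inter_subset_right
  refine IsGreatest.csSup_eq ⟨⟨I, hI.indep, hI.subset.trans inter_subset_left, ?_⟩, ?_⟩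
  · rw [← linearMatroid_span_image_eq_of_isBasis hI, finrank_span_image_eq_ncard
      (linearMatroid_indep_iff.1 hI.indep).2 (hE.subset hI.indep.subset_ground)]
  rintro n ⟨J, hJ, hJX, rfl⟩
  obtain ⟨hJE, hJind⟩ := linearMatroid_indep_iff.1 hJ
  rw [← finrank_span_image_eq_ncard hJind (hE.subset hJE)]
  exact Submodule.finrank_mono (span_mono (image_mono (subset_inter hJX hJE)))

lemma linearMatroid_isFlat_setOf_mem (W : Submodule ℝ V) :
    (linearMatroid φ E hE).IsFlat {a ∈ E | φ a ∈ W} := by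
  rw [Matroid.isFlat_iff_closure_eq, linearMatroid_closure_eq,
    inter_eq_left.2 (sep_subset E _)]
  ext a
  refine ⟨fun ha => ⟨ha.1, span_le.2 ?_ ha.2⟩, fun ha => ⟨ha.1, subset_span ⟨a, ha, rfl⟩⟩⟩
  rintro _ ⟨b, hb, rfl⟩
  exact hb.2

lemma linearMatroid_mem_of_isFlat (hF : (linearMatroid φ E hE).IsFlat F) {a : α} (ha : a ∈ E)
    (hspan : φ a ∈ span ℝ (φ '' F)) : a ∈ F := by
  rw [← hF.closure, linearMatroid_closure_eq, inter_eq_left.2 (show F ⊆ E from hF.subset_ground)]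
  exact ⟨ha, hspan⟩

lemma skewSets_linearMatroid (hFL : Disjoint (span ℝ (φ '' (F ∩ E))) (span ℝ (φ '' (L ∩ E)))) :
    SkewSets (linearMatroid φ E hE) F L := by
  have hsum := Submodule.finrank_sup_add_finrank_inf_eq
    (span ℝ (φ '' (F ∩ E))) (span ℝ (φ '' (L ∩ E)))
  rw [hFL.eq_bot, finrank_bot, add_zero, ← span_union, ← image_union, ← union_inter_distrib_right]
    at hsum
  simp only [SkewSets, rkS_linearMatroid, hsum]

lemma realRep_linearMatroid : RealRep (linearMatroid φ E hE) := by
  let f := (Module.finBasis ℝ V).equivFun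
  refine ⟨finrank ℝ V, f ∘ φ, fun I hI => ?_⟩
  rw [linearMatroid_indep_iff, and_iff_right (show I ⊆ E from hI)]
  exact (f.toLinearMap.linearIndependent_iff f.ker).symm

lemma simpleM_linearMatroid (hloop : ∀ a ∈ E, φ a ≠ 0)
    (hpar : ∀ a ∈ E, ∀ b ∈ E, a ≠ b → ∀ c : ℝ, c • φ a ≠ φ b) :
    SimpleM (linearMatroid φ E hE) := by
  intro X hXE hX
  have hXfin := hE.subset hXE
  rw [linearMatroid_indep_iff, and_iff_right (show X ⊆ E from hXE)]
  interval_cases h : X.ncard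
  · rw [(ncard_eq_zero hXfin).1 h]
    exact linearIndepOn_empty ℝ φ
  · obtain ⟨a, rfl⟩ := ncard_eq_one.1 h
    exact (linearIndepOn_singleton_iff ℝ).2 (hloop a (hXE rfl))
  · obtain ⟨a, b, hab, rfl⟩ := ncard_eq_two.1 h
    have ha : a ∈ E := hXE (mem_insert a {b})
    have hb : b ∈ E := hXE (mem_insert_of_mem a rfl)
    exact (linearIndepOn_pair_iff φ hab (hloop a ha)).2 (hpar a ha b hb hab)

lemma two_le_rkS_linearMatroid (hM : SimpleM (linearMatroid φ E hE)) {a b : α}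
    (ha : a ∈ X ∩ E) (hb : b ∈ X ∩ E) (hab : a ≠ b) : 2 ≤ rkS (linearMatroid φ E hE) X := by
  have hpair : ({a, b} : Set α) ⊆ X ∩ E := insert_subset ha (singleton_subset_iff.2 hb)
  have hind := hM {a, b} (hpair.trans inter_subset_right) (ncard_pair hab).le
  rw [linearMatroid_indep_iff] at hind
  rw [rkS_linearMatroid, ← ncard_pair hab, ← finrank_span_image_eq_ncard hind.2 (toFinite _)]
  exact Submodule.finrank_mono (span_mono (image_mono hpair))

end LinearMatroid

section Planar

variable {κ P : Type*} [AddCommGroup P] [Module ℝ P] {p : κ → P}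

lemma exists_linearIndependent_sub_sub (hp : ¬Collinear ℝ (range p)) (i i' : κ) :
    ∃ s s', LinearIndependent ℝ ![p i - p s, p i' - p s'] := by
  by_contra! h
  obtain ⟨s, hs⟩ : ∃ s, p s ≠ p i := by
    by_contra! hs
    exact hp ((collinear_singleton ℝ (p i)).subset (range_subset_iff.2 hs))
  have hu : p i - p s ≠ 0 := sub_ne_zero.2 hs.symm
  refine hp ((collinear_iff_exists_forall_eq_smul_vadd _).2 ⟨p i', p i - p s, ?_⟩)
  rintro _ ⟨s', rfl⟩
  obtain ⟨c, hc⟩ : ∃ c : ℝ, c • (p i - p s) = p i' - p s' := by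
    simpa [LinearIndependent.pair_iff' hu] using h s s'
  exact ⟨-c, by rw [vadd_eq_add, neg_smul, hc]; abel⟩

lemma exists_linearIndependent_sub_sub_same (hp : ¬Collinear ℝ (range p)) {i i' : κ}
    (hii' : p i ≠ p i') : ∃ s, LinearIndependent ℝ ![p i - p s, p i' - p s] := by
  by_contra! h
  refine hp ((collinear_iff_exists_forall_eq_smul_vadd _).2 ⟨p i, p i' - p i, ?_⟩)
  rintro _ ⟨s, rfl⟩
  obtain ⟨a, b, hab, hne⟩ : ∃ a b : ℝ,
      a • (p i - p s) + b • (p i' - p s) = 0 ∧ ¬(a = 0 ∧ b = 0) := by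
    simpa [LinearIndependent.pair_iff] using h s
  have hsum : a + b ≠ 0 := by
    intro h0
    obtain rfl : b = -a := by linarith
    have hdiff : a • (p i - p i') = 0 := by rw [← hab]; module
    have ha : a = 0 := (smul_eq_zero.1 hdiff).resolve_right (sub_ne_zero.2 hii')
    exact hne ⟨ha, by rw [ha, neg_zero]⟩
  refine ⟨b / (a + b), smul_right_injective P hsum ?_⟩
  simp only [vadd_eq_add, smul_add, smul_smul, mul_div_cancel₀ _ hsum]
  linear_combination (norm := module) (-1 : ℝ) • hab

lemma exists_transversal_linearIndependent {ι : Type*} (hp : ¬Collinear ℝ (range p))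
    (hpinj : Injective p) {q q' : ι × κ} (hqq' : q ≠ q') :
    ∃ τ : ι → κ, LinearIndependent ℝ ![p q.2 - p (τ q.1), p q'.2 - p (τ q'.1)] := by
  obtain ⟨j, i⟩ := q
  obtain ⟨j', i'⟩ := q'
  by_cases hjj' : j = j'
  · subst hjj'
    have hii' : i ≠ i' := fun h => hqq' (h ▸ rfl)
    obtain ⟨s, hs⟩ := exists_linearIndependent_sub_sub_same hp (hpinj.ne hii')
    exact ⟨fun _ => s, hs⟩
  · obtain ⟨s, s', hss'⟩ := exists_linearIndependent_sub_sub hp i i'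
    refine ⟨update (fun _ => s) j' s', ?_⟩
    simpa [update_of_ne hjj'] using hss'

end Planar

section Copies

variable {ι κ δ P : Type*} [AddCommGroup P] {d : δ → P} {p : κ → P}

/-- Layer `j` holds the copy `(eⱼ, p i)` of each planar point `p i`; the red point `(0, d r)` is
the common point at infinity of all lines with direction `d r`. -/
noncomputable def copiesVec (d : δ → P) (p : κ → P) : δ ⊕ (ι × κ) → (ι → ℝ) × P
  | .inl r => (0, d r)
  | .inr q => (Pi.single q.1 1, p q.2)

lemma copiesVec_ne_zero (hd0 : ∀ r, d r ≠ 0) (x : δ ⊕ (ι × κ)) : copiesVec d p x ≠ 0 := by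
  rcases x with r | ⟨j, i⟩
  · simpa [copiesVec] using hd0 r
  · simp [copiesVec, Prod.ext_iff]

variable [Module ℝ P]

lemma copiesVec_smul_ne (hd0 : ∀ r, d r ≠ 0) (hd : ∀ r r', r ≠ r' → ∀ c : ℝ, c • d r ≠ d r')
    (hpinj : Injective p) {x y : δ ⊕ (ι × κ)} (hxy : x ≠ y) (c : ℝ) :
    c • copiesVec d p x ≠ copiesVec d p y := by
  intro h
  rcases x with r | ⟨j, i⟩ <;> rcases y with r' | ⟨j', i'⟩ <;>
    simp only [copiesVec, Prod.smul_mk, Prod.mk.injEq, smul_zero] at h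
  · exact hd r r' (fun h' => hxy (h' ▸ rfl)) c h.2
  · simpa using congrFun h.1.symm j'
  · obtain rfl : c = 0 := by simpa using congrFun h.1 j
    exact hd0 r' (by simpa using h.2.symm)
  · have hj : c * (Pi.single j 1 : ι → ℝ) j' = 1 := by simpa using congrFun h.1 j'
    obtain rfl : j = j' := by
      by_contra hne
      simp [Ne.symm hne] at hj
    obtain rfl : c = 1 := by simpa using hj
    exact hxy (by rw [hpinj ((one_smul ℝ (p i)).symm.trans h.2)])

lemma exists_copiesVec_inl_mem_span_pair (hpinj : Injective p)
    (hdir : ∀ i i', i ≠ i' → ∃ r, p i - p i' ∈ ℝ ∙ d r) (j : ι) {i i' : κ} (hii' : i ≠ i') :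
    ∃ r, copiesVec d p (.inl r) ∈
      span ℝ {copiesVec d p (.inr (j, i)), copiesVec d p (.inr (j, i'))} := by
  obtain ⟨r, c, hc⟩ : ∃ r, ∃ c : ℝ, c • d r = p i - p i' := by
    simpa [mem_span_singleton] using hdir i i' hii'
  have hc0 : c ≠ 0 := by
    rintro rfl
    exact hii' (hpinj (sub_eq_zero.1 (by simpa using hc.symm)))
  refine ⟨r, ?_⟩
  have hr : copiesVec d p (.inl r) =
      c⁻¹ • (copiesVec d p (.inr (j, i)) - copiesVec d p (.inr (j, i'))) := by
    simp [copiesVec, ← hc, smul_smul, inv_mul_cancel₀ hc0]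
  rw [hr]
  exact smul_mem _ _
    (sub_mem (subset_span (mem_insert _ _)) (subset_span (mem_insert_of_mem _ rfl)))

noncomputable def transversalSpan (d : δ → P) (p : κ → P) (τ : ι → κ) :
    Submodule ℝ ((ι → ℝ) × P) :=
  span ℝ (range fun j => copiesVec d p (.inr (j, τ j)))

lemma span_image_setOf_mem_transversalSpan (τ : ι → κ) :
    span ℝ (copiesVec d p '' {x | copiesVec d p x ∈ transversalSpan d p τ}) =
      transversalSpan d p τ := by
  refine le_antisymm (span_le.2 (image_subset_iff.2 fun _ h => h)) (span_le.2 ?_)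
  rintro _ ⟨j, rfl⟩
  exact subset_span ⟨.inr (j, τ j), subset_span ⟨j, rfl⟩, rfl⟩

variable [Fintype ι]

lemma span_range_copiesVec (hspan : span ℝ (range d) = ⊤) (i₀ : κ) :
    span ℝ (range (copiesVec (ι := ι) d p)) = ⊤ := by
  set S := span ℝ (range (copiesVec (ι := ι) d p))
  have hred : ∀ w : P, ((0 : ι → ℝ), w) ∈ S := by
    intro w
    have hw : LinearMap.inr ℝ (ι → ℝ) P w ∈ map (LinearMap.inr ℝ (ι → ℝ) P) (span ℝ (range d)) :=
      mem_map_of_mem (hspan ▸ mem_top)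
    rw [map_span, ← range_comp] at hw
    exact span_mono (range_subset_iff.2 fun r => by exact ⟨.inl r, rfl⟩) hw
  rw [eq_top_iff, ← LinearMap.sup_range_inl_inr, sup_le_iff]
  constructor
  · rw [LinearMap.range_eq_map, ← (Pi.basisFun ℝ ι).span_eq, map_span, span_le]
    rintro _ ⟨_, ⟨j, rfl⟩, rfl⟩
    have hj : LinearMap.inl ℝ _ P (Pi.basisFun ℝ ι j) =
        copiesVec d p (.inr (j, i₀)) - (0, p i₀) := by
      simp [copiesVec]
    rw [hj]
    exact sub_mem (subset_span ⟨_, rfl⟩) (hred _)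
  · rintro _ ⟨w, rfl⟩
    exact hred w

lemma snd_eq_of_mem_transversalSpan {τ : ι → κ} {v : (ι → ℝ) × P}
    (hv : v ∈ transversalSpan d p τ) : v.2 = Fintype.linearCombination ℝ (p ∘ τ) v.1 := by
  suffices transversalSpan d p τ ≤ LinearMap.ker
      (Fintype.linearCombination ℝ (p ∘ τ) ∘ₗ LinearMap.fst ℝ _ P - LinearMap.snd ℝ _ P) by
    exact (sub_eq_zero.1 (LinearMap.mem_ker.1 (this hv))).symm
  refine span_le.2 ?_
  rintro _ ⟨j, rfl⟩
  simp [copiesVec]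

lemma finrank_transversalSpan (τ : ι → κ) :
    finrank ℝ (transversalSpan d p τ) = Fintype.card ι := by
  rw [transversalSpan, finrank_span_eq_card]
  refine LinearIndependent.of_comp (LinearMap.fst ℝ (ι → ℝ) P) ?_
  convert (Pi.basisFun ℝ ι).linearIndependent
  ext j : 1
  simp [copiesVec]

lemma copiesVec_inl_notMem_transversalSpan (hd0 : ∀ r, d r ≠ 0) (τ : ι → κ) (r : δ) :
    copiesVec d p (.inl r) ∉ transversalSpan d p τ :=
  fun h => hd0 r (by simpa [copiesVec] using snd_eq_of_mem_transversalSpan h)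

lemma disjoint_transversalSpan {τ : ι → κ} {q q' : ι × κ}
    (hτ : LinearIndependent ℝ ![p q.2 - p (τ q.1), p q'.2 - p (τ q'.1)]) :
    Disjoint (transversalSpan d p τ)
      (span ℝ {copiesVec d p (.inr q), copiesVec d p (.inr q')}) := by
  rw [Submodule.disjoint_def]
  intro v hvW hvL
  obtain ⟨a, b, rfl⟩ := mem_span_pair.1 hvL
  have h := snd_eq_of_mem_transversalSpan hvW
  simp [copiesVec] at h
  obtain ⟨rfl, rfl⟩ := LinearIndependent.pair_iff.1 hτ a b
    (by linear_combination (norm := module) h)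
  simp

end Copies

section CopiesMatroid

variable {ι κ δ P : Type*} [Fintype ι] [Finite κ] [Finite δ] [AddCommGroup P] [Module ℝ P]
  [FiniteDimensional ℝ P] {d : δ → P} {p : κ → P} {e : δ ⊕ (ι × κ) → α} {F H L : Set α}

/-- The value `0` of the extension off `range e` is irrelevant: the ground set is `range e`. -/
noncomputable def copiesMatroid (d : δ → P) (p : κ → P) (e : δ ⊕ (ι × κ) → α) : Matroid α :=
  linearMatroid (extend e (copiesVec d p) 0) (range e) (finite_range e)

lemma copiesMatroid_ground : (copiesMatroid d p e).E = range e := rfl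

lemma rkS_copiesMatroid (he : Injective e) (X : Set α) :
    rkS (copiesMatroid d p e) X = finrank ℝ (span ℝ (copiesVec d p '' (e ⁻¹' X))) := by
  rw [copiesMatroid, rkS_linearMatroid, extend_image_inter_range he]

lemma copiesMatroid_mem_of_isFlat (he : Injective e) (hF : (copiesMatroid d p e).IsFlat F)
    {x : δ ⊕ (ι × κ)} (hx : copiesVec d p x ∈ span ℝ (copiesVec d p '' (e ⁻¹' F))) : e x ∈ F := by
  refine linearMatroid_mem_of_isFlat hF (mem_range_self x) ?_
  rwa [← inter_eq_left.2 (show F ⊆ range e from hF.subset_ground), extend_image_inter_range he,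
    he.extend_apply]

lemma copiesMatroid_isFlat_image (he : Injective e) (W : Submodule ℝ ((ι → ℝ) × P)) :
    (copiesMatroid d p e).IsFlat (e '' {x | copiesVec d p x ∈ W}) := by
  have hF : e '' {x | copiesVec d p x ∈ W} = {a ∈ range e | extend e (copiesVec d p) 0 a ∈ W} := by
    ext a
    constructor
    · rintro ⟨x, hx, rfl⟩
      exact ⟨mem_range_self x, by rwa [he.extend_apply]⟩
    · rintro ⟨⟨x, rfl⟩, hx⟩
      exact ⟨x, by rwa [he.extend_apply] at hx, rfl⟩
  rw [hF]
  exact linearMatroid_isFlat_setOf_mem W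

lemma skewSets_copiesMatroid (he : Injective e)
    (h : Disjoint (span ℝ (copiesVec d p '' (e ⁻¹' F))) (span ℝ (copiesVec d p '' (e ⁻¹' L)))) :
    SkewSets (copiesMatroid d p e) F L :=
  skewSets_linearMatroid (by rwa [extend_image_inter_range he, extend_image_inter_range he])

lemma simpleM_copiesMatroid (he : Injective e) (hd0 : ∀ r, d r ≠ 0)
    (hd : ∀ r r', r ≠ r' → ∀ c : ℝ, c • d r ≠ d r') (hpinj : Injective p) :
    SimpleM (copiesMatroid d p e) := by
  refine simpleM_linearMatroid ?_ ?_
  · rintro _ ⟨x, rfl⟩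
    rw [he.extend_apply]
    exact copiesVec_ne_zero hd0 x
  · rintro _ ⟨x, rfl⟩ _ ⟨y, rfl⟩ hxy c
    rw [he.extend_apply, he.extend_apply]
    exact copiesVec_smul_ne hd0 hd hpinj (fun h => hxy (congrArg e h)) c

lemma rk_copiesMatroid (he : Injective e) (hspan : span ℝ (range d) = ⊤) (i₀ : κ) :
    rk (copiesMatroid d p e) = Fintype.card ι + finrank ℝ P := by
  rw [rk, rkS_copiesMatroid he, copiesMatroid_ground, preimage_range, image_univ,
    span_range_copiesVec hspan i₀, finrank_top, finrank_prod, finrank_fintype_fun_eq_card]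

/-- A flat whose rank exceeds the number of layers contains two points of one layer, hence the
red point at infinity of the line through them. -/
lemma inter_range_inl_nonempty_of_isFlat (he : Injective e) (hpinj : Injective p)
    (hdir : ∀ i i', i ≠ i' → ∃ r, p i - p i' ∈ ℝ ∙ d r) (hH : (copiesMatroid d p e).IsFlat H)
    (hrk : Fintype.card ι < rkS (copiesMatroid d p e) H) : (H ∩ range (e ∘ .inl)).Nonempty := by
  by_contra hHR
  rw [not_nonempty_iff_eq_empty] at hHR
  have hblue : copiesVec d p '' (e ⁻¹' H) = (copiesVec d p ∘ .inr) '' {q | e (.inr q) ∈ H} := by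
    ext v
    constructor
    · rintro ⟨r | q, hx, rfl⟩
      · exact (hHR.subset ⟨hx, r, rfl⟩).elim
      · exact ⟨q, hx, rfl⟩
    · rintro ⟨q, hq, rfl⟩
      exact ⟨.inr q, hq, rfl⟩
  rw [rkS_copiesMatroid he, hblue] at hrk
  obtain ⟨⟨j, i⟩, hq, ⟨j', i'⟩, hq', hne, hjj'⟩ :=
    exists_ne_fst_eq_of_card_lt_finrank (copiesVec d p ∘ .inr) hrk
  obtain rfl : j = j' := hjj'
  obtain ⟨r, hr⟩ :=
    exists_copiesVec_inl_mem_span_pair hpinj hdir j (fun (h : i = i') => hne (by rw [h]))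
  have hrH : copiesVec d p (.inl r) ∈ span ℝ (copiesVec d p '' (e ⁻¹' H)) :=
    span_mono (pair_subset (mem_image_of_mem (copiesVec d p) (show .inr (j, i) ∈ e ⁻¹' H from hq))
      (mem_image_of_mem (copiesVec d p) (show .inr (j, i') ∈ e ⁻¹' H from hq'))) hr
  exact hHR.subset ⟨copiesMatroid_mem_of_isFlat he hH hrH, r, rfl⟩

/-- `F` is spanned by one point of each layer, chosen using non-collinearity so that this
transversal is skew to the line. -/
lemma exists_skew_flat (he : Injective e) (hp : ¬Collinear ℝ (range p)) (hpinj : Injective p)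
    (hd0 : ∀ r, d r ≠ 0) (hLB : L ⊆ range (e ∘ .inr)) (hL : rkS (copiesMatroid d p e) L = 2) :
    ∃ F, (copiesMatroid d p e).IsFlat F ∧ rkS (copiesMatroid d p e) F = Fintype.card ι ∧
      SkewSets (copiesMatroid d p e) F L ∧ F ∩ range (e ∘ .inl) = ∅ := by
  rw [rkS_copiesMatroid he] at hL
  obtain ⟨_, ⟨x, hx, rfl⟩, _, ⟨y, hy, rfl⟩, hxy, hspanL⟩ :=
    exists_pair_span_eq_of_finrank_eq_two ((toFinite _).image _) hL
  obtain ⟨q, rfl⟩ : ∃ q, .inr q = x := by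
    obtain ⟨q, hq⟩ := hLB hx
    exact ⟨q, he hq⟩
  obtain ⟨q', rfl⟩ : ∃ q', .inr q' = y := by
    obtain ⟨q', hq'⟩ := hLB hy
    exact ⟨q', he hq'⟩
  obtain ⟨τ, hτ⟩ := exists_transversal_linearIndependent hp hpinj (q := q) (q' := q')
    (by rintro rfl; exact hxy rfl)
  have hspanF : span ℝ (copiesVec d p ''
      (e ⁻¹' (e '' {x | copiesVec d p x ∈ transversalSpan d p τ}))) = transversalSpan d p τ := by
    rw [preimage_image_eq _ he, span_image_setOf_mem_transversalSpan]
  refine ⟨_, copiesMatroid_isFlat_image he (transversalSpan d p τ), ?_, ?_, ?_⟩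
  · rw [rkS_copiesMatroid he, hspanF, finrank_transversalSpan]
  · exact skewSets_copiesMatroid he (by rw [hspanF, hspanL]; exact disjoint_transversalSpan hτ)
  · rw [eq_empty_iff_forall_notMem]
    rintro _ ⟨⟨x, hx, rfl⟩, r, hr⟩
    rw [comp_apply, he.eq_iff] at hr
    subst hr
    exact copiesVec_inl_notMem_transversalSpan hd0 τ r hx

end CopiesMatroid

section NearPencil

variable {t : ℕ}

noncomputable def nearPencil (t : ℕ) (i : Fin t) : ℝ × ℝ :=
  if (i : ℕ) = 0 then (0, 1) else (i, 0)

/-- The `t` directions determined by `nearPencil t`. -/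
noncomputable def nearPencilDir (t : ℕ) (r : Fin t) : ℝ × ℝ :=
  if (r : ℕ) = 0 then (1, 0) else (r, -1)

lemma nearPencil_injective : Injective (nearPencil t) := by
  intro i i' h
  simp only [nearPencil] at h
  split_ifs at h with hi hi' hi' <;> simp only [Prod.mk.injEq] at h
  · exact Fin.ext (hi.trans hi'.symm)
  · norm_num at h
  · norm_num at h
  · exact Fin.ext (by exact_mod_cast h.1)

lemma not_collinear_range_nearPencil (ht : 3 ≤ t) : ¬Collinear ℝ (range (nearPencil t)) := by
  intro h
  have hsub : ({(0, 1), (1, 0), (2, 0)} : Set (ℝ × ℝ)) ⊆ range (nearPencil t) := by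
    rintro _ (rfl | rfl | rfl)
    · exact ⟨⟨0, by omega⟩, by simp [nearPencil]⟩
    · exact ⟨⟨1, by omega⟩, by simp [nearPencil]⟩
    · exact ⟨⟨2, by omega⟩, by norm_num [nearPencil]⟩
  obtain ⟨v, hv⟩ := (collinear_iff_of_mem (p₀ := ((1, 0) : ℝ × ℝ)) (by simp)).1 (h.subset hsub)
  obtain ⟨a, ha⟩ := hv (0, 1) (by simp)
  obtain ⟨b, hb⟩ := hv (2, 0) (by simp)
  simp only [vadd_eq_add, Prod.ext_iff, Prod.smul_fst, Prod.smul_snd, Prod.fst_add,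
    Prod.snd_add, smul_eq_mul] at ha hb
  have hb0 : b = 0 := by linear_combination b * ha.2 - a * hb.2
  rw [hb0] at hb
  norm_num at hb

lemma nearPencilDir_ne_zero (r : Fin t) : nearPencilDir t r ≠ 0 := by
  unfold nearPencilDir
  split_ifs <;> simp [Prod.ext_iff]

lemma nearPencilDir_smul_ne {r r' : Fin t} (hrr' : r ≠ r') (c : ℝ) :
    c • nearPencilDir t r ≠ nearPencilDir t r' := by
  intro h
  simp only [nearPencilDir] at h
  split_ifs at h with hr hr' hr' <;> simp only [Prod.smul_mk, smul_eq_mul, Prod.mk.injEq] at h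
  · exact hrr' (Fin.ext (hr.trans hr'.symm))
  · linarith [h.2]
  · obtain rfl : c = 0 := by linarith [h.2]
    norm_num at h
  · obtain rfl : c = 1 := by linarith [h.2]
    exact hrr' (Fin.ext (by exact_mod_cast (one_mul (r : ℝ)).symm.trans h.1))

lemma nearPencil_sub_mem_span_nearPencilDir {i i' : Fin t} (hii' : i ≠ i') :
    ∃ r, nearPencil t i - nearPencil t i' ∈ ℝ ∙ nearPencilDir t r := by
  simp only [mem_span_singleton, nearPencil, nearPencilDir]
  by_cases hi : (i : ℕ) = 0
  · have hi' : (i' : ℕ) ≠ 0 := fun h => hii' (Fin.ext (hi.trans h.symm))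
    exact ⟨i', -1, by simp [hi, hi']⟩
  by_cases hi' : (i' : ℕ) = 0
  · exact ⟨i, 1, by simp [hi, hi']⟩
  · exact ⟨⟨0, by omega⟩, (i : ℝ) - i', by simp [hi, hi']⟩

lemma span_range_nearPencilDir (ht : 2 ≤ t) : span ℝ (range (nearPencilDir t)) = ⊤ := by
  refine eq_top_iff.2 fun v _ => ?_
  have hv : v = (v.1 + v.2) • nearPencilDir t ⟨0, by omega⟩ -
      v.2 • nearPencilDir t ⟨1, by omega⟩ := by
    simp [nearPencilDir]
  rw [hv]
  exact sub_mem (smul_mem _ _ (subset_span ⟨_, rfl⟩)) (smul_mem _ _ (subset_span ⟨_, rfl⟩))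

end NearPencil

/-- `b_k(t) ≥ (k-1)t` for `k ≥ 3` and `t ≥ 3`. -/
theorem stmt16 (k t : ℕ) (hk : 3 ≤ k) (ht : 3 ≤ t) :
    ∃ (M : Matroid ℕ) (R B : Set ℕ), M.Finite ∧ SimpleM M ∧ RealRep M ∧
      rk M = k + 1 ∧ R ∪ B = M.E ∧ Disjoint R B ∧
      R.ncard = t ∧ B.ncard = (k - 1) * t ∧ 2 ≤ rkS M B ∧
      (∀ H, Hyp M H → (H ∩ R).Nonempty) ∧
      (∀ L, (M.restrict B).IsFlat L → rkS (M.restrict B) L = 2 →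
        ∃ F, M.IsFlat F ∧ rkS M F = k - 1 ∧ SkewSets M F L ∧ F ∩ R = ∅) := by
  let e : Fin t ⊕ (Fin (k - 1) × Fin t) → ℕ := Encodable.encode
  have he : Injective e := Encodable.encode_injective
  let M := copiesMatroid (nearPencilDir t) (nearPencil t) e
  have hsimple : SimpleM M :=
    simpleM_copiesMatroid he nearPencilDir_ne_zero (fun _ _ => nearPencilDir_smul_ne)
      nearPencil_injective
  have hrk : rk M = k + 1 := by
    rw [rk_copiesMatroid he (span_range_nearPencilDir (by omega)) ⟨0, by omega⟩,
      Fintype.card_fin, finrank_prod, finrank_self]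
    omega
  refine ⟨M, range (e ∘ .inl), range (e ∘ .inr), ⟨finite_range e⟩, hsimple,
    realRep_linearMatroid, hrk, ?_, ?_, ?_, ?_, ?_, ?_, ?_⟩
  · rw [copiesMatroid_ground, range_comp, range_comp, ← image_union, range_inl_union_range_inr,
      image_univ]
  · exact disjoint_range_iff.2 fun _ _ h => Sum.inl_ne_inr (he h)
  · simp [ncard_range_of_injective (he.comp Sum.inl_injective)]
  · simp [ncard_range_of_injective (he.comp Sum.inr_injective)]
  · exact two_le_rkS_linearMatroid hsimple (a := e (.inr (⟨0, by omega⟩, ⟨0, by omega⟩)))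
      (b := e (.inr (⟨0, by omega⟩, ⟨1, by omega⟩))) ⟨⟨_, rfl⟩, ⟨_, rfl⟩⟩ ⟨⟨_, rfl⟩, ⟨_, rfl⟩⟩
      (by simp [e])
  · rintro H ⟨hH, hrkH⟩
    exact inter_range_inl_nonempty_of_isFlat he nearPencil_injective
      (fun _ _ => nearPencil_sub_mem_span_nearPencilDir) hH
      (by rw [hrkH, hrk, Fintype.card_fin]; omega)
  · intro L hL hL2
    have hLB : L ⊆ range (e ∘ .inr) := hL.subset_ground
    rw [rkS_restrict, inter_eq_left.2 hLB] at hL2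
    obtain ⟨F, hF, hrkF, hskew, hFR⟩ := exists_skew_flat he (not_collinear_range_nearPencil ht)
      nearPencil_injective nearPencilDir_ne_zero hLB hL2
    exact ⟨F, hF, by rw [hrkF, Fintype.card_fin], hskew, hFR⟩

end MatroidPaper
end
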